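/- Let R = M[d] be the skew polynomial ring over M = ℂ[Q,R] with relation df - fd = D(f) for f ∈ M, where D is the Serre derivation. If N is a graded R-module whose underlying M-module is finitely generated with homogeneous components of bounded dimension, then Ann_M(N) is a nonzero graded d-ideal of M, and hence contains 𝔭^r = (Δ^r) for some r ≥ 0. -/

import Mathlib

open MvPolynomial

noncomputable section

/-- The ring of modular forms, modeled as a weighted polynomial ring `ℂ[Q,R]`,
`Q` of weight 4, `R` of weight 6. -/
abbrev MM := MvPolynomial (Fin 2) ℂ

def Qg : MM := X 0
def Rg : MM := X 1

/-- The weights: `deg Q = 4`, `deg R = 6`. -/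
def wt : Fin 2 → ℕ := ![4, 6]

/-- The Serre derivation, determined by `D(Q) = -(1/3) R` and `D(R) = -(1/2) Q²`. -/
def Dser : Derivation ℂ MM MM :=
  mkDerivation ℂ ![(-(1/3 : ℂ)) • Rg, (-(1/2 : ℂ)) • Qg ^ 2]

/-- `Δ = (Q³ - R²)/1728`. -/
def Δg : MM := (1/1728 : ℂ) • (Qg ^ 3 - Rg ^ 2)

/-- An ideal is graded (w.r.t. the weighted grading) if it is spanned by its
weighted-homogeneous elements. -/
def IsGradedIdeal (I : Ideal MM) : Prop :=
  I = Ideal.span {x : MM | x ∈ I ∧ ∃ n : ℕ, x ∈ weightedHomogeneousSubmodule ℂ wt n}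

/-! If `f` kills `N`, then so does `D f`, because `d (f • x) = f • d x + D f • x`, and so does every
weighted-homogeneous component of `f`, because multiplication by a form of weight `n` shifts the
grading of `N` by `n`. The annihilator is nonzero: otherwise, acting on finitely many homogeneous
generators of `N`, the forms of weight `n` would embed into a space of dimension at most
(number of generators) · `B` for every `n`, whereas the monomials `Q^{3a} R^{2(t-a)}` give `t + 1`
independent forms of weight `12 t`.

For the power of `Δ`, write `D = -(1/3) R ∂_Q - (1/2) Q² ∂_R` and use Euler's identity
`4 Q ∂_Q f + 6 R ∂_R f = k f` for `f` of weight `k`: eliminating one partial derivative with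
`Q³ - R² = 1728 Δ` shows that `Δ ∂_Q f` and `Δ ∂_R f` are combinations of `f` and `D f`, so they lie
in every `D`-stable ideal containing `f`. Starting from a nonzero homogeneous element of the
annihilator and differentiating until the weight drops to `0` produces `Δ^r · c` with `c` a nonzero
constant. -/

lemma MvPolynomial.isUnit_ofNat {σ K : Type*} [Field K] [CharZero K] (n : ℕ) [n.AtLeastTwo] :
    IsUnit (OfNat.ofNat n : MvPolynomial σ K) := by
  rw [← map_ofNat C]
  exact (IsUnit.mk0 _ (OfNat.ofNat_ne_zero n)).map C

namespace MvPolynomial.IsWeightedHomogeneous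

variable {σ R : Type*} [CommSemiring R] {w : σ → ℕ} {f : MvPolynomial σ R} {k : ℕ}

lemma le_of_pderiv_ne_zero (hf : f.IsWeightedHomogeneous w k) {i : σ} (hi : pderiv i f ≠ 0) :
    w i ≤ k := by
  obtain ⟨d, hd, hdi⟩ := (mem_vars_iff_mem_support i).mp
    (by_contra fun h => hi (pderiv_eq_zero_of_notMem_vars h))
  rw [← hf (mem_support_iff.mp hd)]
  exact Finsupp.le_weight_of_ne_zero' w (Finsupp.mem_support_iff.mp hdi)

lemma exists_pderiv_ne_zero [Fintype σ] [IsAddTorsionFree R] (hf : f.IsWeightedHomogeneous w k)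
    (hk : k ≠ 0) (hf0 : f ≠ 0) : ∃ i, pderiv i f ≠ 0 := by
  by_contra! h
  have := hf.sum_weight_X_mul_pderiv
  simp only [h, mul_zero, smul_zero, Finset.sum_const_zero] at this
  exact hf0 ((smul_eq_zero.mp this.symm).resolve_left hk)

end MvPolynomial.IsWeightedHomogeneous

lemma Derivation.pow_succ_mul_apply {R A : Type*} [CommSemiring R] [CommRing A] [Algebra R A]
    (D : Derivation R A A) (a f : A) (m : ℕ) :
    a ^ (m + 1) * D f = a * D (a ^ m * f) - m * D a * (a ^ m * f) := by
  rw [D.leibniz, D.leibniz_pow, smul_eq_mul, smul_eq_mul, smul_eq_mul, nsmul_eq_mul]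
  cases m <;> simp only [pow_succ, Nat.cast_zero, Nat.cast_succ, Nat.add_sub_cancel] <;> ring

lemma Module.apply_mem_annihilator_of_leibniz {A N : Type*} [CommSemiring A] [AddCommMonoid N]
    [Module A N] (D : A → A) (d : N →+ N) (hd : ∀ (f : A) (x : N), d (f • x) = f • d x + D f • x)
    {f : A} (hf : f ∈ Module.annihilator A N) : D f ∈ Module.annihilator A N := by
  rw [Module.mem_annihilator] at hf ⊢
  intro x
  simpa [hf] using (hd f x).symm

lemma exists_finset_homogeneous_span_eq_top {ι A R N : Type*} [DecidableEq ι] [Semiring A]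
    [Semiring R] [AddCommMonoid N] [Module A N] [Module R N] (𝒩 : ι → Submodule R N)
    [DirectSum.Decomposition 𝒩] [Module.Finite A N] :
    ∃ s : Finset N, (∀ y ∈ s, ∃ k, y ∈ 𝒩 k) ∧ Submodule.span A (s : Set N) = ⊤ := by
  classical
  obtain ⟨s, hs⟩ := Module.Finite.fg_top (R := A) (M := N)
  refine ⟨s.biUnion fun x => (DirectSum.decompose 𝒩 x).support.image
    fun k => (DirectSum.decompose 𝒩 x k : N), ?_, ?_⟩
  · simp only [Finset.mem_biUnion, Finset.mem_image]
    rintro _ ⟨x, -, k, -, rfl⟩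
    exact ⟨k, (DirectSum.decompose 𝒩 x k).2⟩
  · rw [eq_top_iff, ← hs, Submodule.span_le]
    intro x hx
    rw [← DirectSum.sum_support_decompose 𝒩 x]
    refine sum_mem fun k hk => Submodule.subset_span ?_
    exact Finset.mem_biUnion.mpr ⟨x, hx, Finset.mem_image_of_mem _ hk⟩

section GradedModule

variable {σ R N : Type*} [CommSemiring R] [AddCommMonoid N] [Module R N]
  [Module (MvPolynomial σ R) N] {w : σ → ℕ} {𝒩 : ℤ → Submodule R N} [DirectSum.Decomposition 𝒩]

lemma decompose_smul_apply_add
    (hcompat : ∀ (n : ℕ) (f : MvPolynomial σ R), f ∈ weightedHomogeneousSubmodule R w n →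
      ∀ (k : ℤ) (x : N), x ∈ 𝒩 k → f • x ∈ 𝒩 (k + n))
    (f : MvPolynomial σ R) {k : ℤ} {x : N} (hx : x ∈ 𝒩 k) (n : ℕ) :
    (DirectSum.decompose 𝒩 (f • x) (k + n) : N) = weightedHomogeneousComponent w n f • x := by
  classical
  have hterm : ∀ d, (DirectSum.decompose 𝒩 (monomial d (coeff d f) • x) (k + n) : N) =
      if Finsupp.weight w d = n then monomial d (coeff d f) • x else 0 := by
    intro d
    have hmem := hcompat _ _ (isWeightedHomogeneous_monomial w d (coeff d f) rfl) k x hx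
    split_ifs with h
    · rw [← h, DirectSum.decompose_of_mem_same 𝒩 hmem]
    · exact DirectSum.decompose_of_mem_ne 𝒩 hmem (by omega)
  conv_lhs => rw [f.as_sum, Finset.sum_smul, DirectSum.decompose_sum, DFinsupp.finsetSum_apply,
    Submodule.coe_sum]
  rw [weightedHomogeneousComponent_apply, Finset.sum_smul, Finset.sum_filter]
  exact Finset.sum_congr rfl fun d _ => hterm d

lemma weightedHomogeneousComponent_mem_annihilator
    (hcompat : ∀ (n : ℕ) (f : MvPolynomial σ R), f ∈ weightedHomogeneousSubmodule R w n →
      ∀ (k : ℤ) (x : N), x ∈ 𝒩 k → f • x ∈ 𝒩 (k + n))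
    {f : MvPolynomial σ R} (hf : f ∈ Module.annihilator (MvPolynomial σ R) N) (n : ℕ) :
    weightedHomogeneousComponent w n f ∈ Module.annihilator (MvPolynomial σ R) N := by
  classical
  rw [Module.mem_annihilator] at hf ⊢
  intro x
  rw [← DirectSum.sum_support_decompose 𝒩 x, Finset.smul_sum]
  refine Finset.sum_eq_zero fun k _ => ?_
  rw [← decompose_smul_apply_add hcompat f (DirectSum.decompose 𝒩 x k).2 n, hf,
    DirectSum.decompose_zero, DirectSum.zero_apply, Submodule.coe_zero]

end GradedModule

lemma exists_finrank_weightedHomogeneousSubmodule_le {σ K N : Type*} [Field K] [AddCommGroup N]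
    [Module K N] [Module (MvPolynomial σ K) N] [IsScalarTower K (MvPolynomial σ K) N]
    [Module.Finite (MvPolynomial σ K) N] {w : σ → ℕ} (𝒩 : ℤ → Submodule K N)
    [DirectSum.Decomposition 𝒩]
    (hcompat : ∀ (n : ℕ) (f : MvPolynomial σ K), f ∈ weightedHomogeneousSubmodule K w n →
      ∀ (k : ℤ) (x : N), x ∈ 𝒩 k → f • x ∈ 𝒩 (k + n))
    (hfd : ∀ k, FiniteDimensional K (𝒩 k)) {B : ℕ} (hbd : ∀ k, Module.finrank K (𝒩 k) ≤ B)
    (hann : Module.annihilator (MvPolynomial σ K) N = ⊥) :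
    ∃ C, ∀ n : ℕ, Module.finrank K (weightedHomogeneousSubmodule K w n) ≤ C := by
  obtain ⟨s, hs, hspan⟩ := exists_finset_homogeneous_span_eq_top (A := MvPolynomial σ K) 𝒩
  choose deg hdeg using hs
  refine ⟨Fintype.card s * B, fun n => ?_⟩
  have := hfd
  let Φ : weightedHomogeneousSubmodule K w n →ₗ[K] ∀ y : s, 𝒩 (deg y y.2 + n) :=
    LinearMap.pi fun y => LinearMap.codRestrict _
      ((LinearMap.toSpanSingleton _ N y).restrictScalars K ∘ₗ
        (weightedHomogeneousSubmodule K w n).subtype)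
      fun f => hcompat n f f.2 _ _ (hdeg y y.2)
  have hΦ : Function.Injective Φ := by
    refine (injective_iff_map_eq_zero Φ).mpr fun f hf => Subtype.ext ?_
    have hfann : (f : MvPolynomial σ K) ∈ Module.annihilator (MvPolynomial σ K) N := by
      rw [← Submodule.annihilator_top, ← hspan, Submodule.mem_annihilator_span]
      exact fun y => congrArg Subtype.val (congrFun hf y)
    simpa [hann] using hfann
  calc Module.finrank K (weightedHomogeneousSubmodule K w n)
      ≤ Module.finrank K (∀ y : s, 𝒩 (deg y y.2 + n)) :=
        LinearMap.finrank_le_finrank_of_injective hΦ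
    _ = ∑ y : s, Module.finrank K (𝒩 (deg y y.2 + n)) := Module.finrank_pi_fintype K (ι := s)
    _ ≤ Fintype.card s * B := by
        simpa using Finset.sum_le_card_nsmul (Finset.univ : Finset s) _ B fun y _ => hbd _

lemma wt_ne_zero (i : Fin 2) : wt i ≠ 0 := by
  fin_cases i <;> decide

lemma succ_le_finrank_weightedHomogeneousSubmodule (t : ℕ) :
    t + 1 ≤ Module.finrank ℂ (weightedHomogeneousSubmodule ℂ wt (12 * t)) := by
  have : Module.Finite ℂ (weightedHomogeneousSubmodule ℂ wt (12 * t)) :=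
    Module.Finite.iff_fg.mpr (weightedHomogeneousSubmodule_fg ℂ wt wt_ne_zero _)
  let e : Fin (t + 1) → Fin 2 →₀ ℕ :=
    fun a => Finsupp.single 0 (3 * (a : ℕ)) + Finsupp.single 1 (2 * (t - a))
  have he : Function.Injective e := fun a b hab => by
    have := congrArg (· 0) hab
    simp [e] at this
    omega
  have hwe : ∀ a, Finsupp.weight wt (e a) = 12 * t := fun a => by
    simp only [e, map_add, Finsupp.weight_single]
    simp [wt]
    omega
  let v : Fin (t + 1) → weightedHomogeneousSubmodule ℂ wt (12 * t) :=
    fun a => ⟨monomial (e a) 1, isWeightedHomogeneous_monomial _ _ _ (hwe a)⟩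
  have hv : LinearIndependent ℂ v := by
    refine LinearIndependent.of_comp (weightedHomogeneousSubmodule ℂ wt (12 * t)).subtype ?_
    have hcomp : (weightedHomogeneousSubmodule ℂ wt (12 * t)).subtype ∘ v =
        basisMonomials (Fin 2) ℂ ∘ e := by
      ext a
      simp [v, coe_basisMonomials]
    rw [hcomp]
    exact (basisMonomials (Fin 2) ℂ).linearIndependent.comp e he
  simpa using hv.fintype_card_le_finrank

lemma annihilator_ne_bot {N : Type*} [AddCommGroup N] [Module ℂ N] [Module MM N]
    [IsScalarTower ℂ MM N] [Module.Finite MM N] (𝒩 : ℤ → Submodule ℂ N)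
    [DirectSum.Decomposition 𝒩]
    (hcompat : ∀ (n : ℕ) (f : MM), f ∈ weightedHomogeneousSubmodule ℂ wt n →
      ∀ (k : ℤ) (x : N), x ∈ 𝒩 k → f • x ∈ 𝒩 (k + n))
    (hfd : ∀ k, FiniteDimensional ℂ (𝒩 k)) {B : ℕ} (hbd : ∀ k, Module.finrank ℂ (𝒩 k) ≤ B) :
    Module.annihilator MM N ≠ ⊥ := by
  intro hann
  obtain ⟨C, hC⟩ := exists_finrank_weightedHomogeneousSubmodule_le 𝒩 hcompat hfd hbd hann
  have := succ_le_finrank_weightedHomogeneousSubmodule C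
  have := hC (12 * C)
  omega

lemma isGradedIdeal_of_weightedHomogeneousComponent_mem {I : Ideal MM}
    (hI : ∀ f ∈ I, ∀ n : ℕ, weightedHomogeneousComponent wt n f ∈ I) : IsGradedIdeal I := by
  refine le_antisymm (fun f hf => ?_) (Ideal.span_le.mpr fun x hx => hx.1)
  rw [← sum_weightedHomogeneousComponent wt f,
    finsum_eq_sum _ (weightedHomogeneousComponent_finsupp f)]
  exact Ideal.sum_mem _ fun n _ => Ideal.subset_span
    ⟨hI f hf n, n, weightedHomogeneousComponent_mem wt f n⟩

lemma six_mul_Dser (f : MM) :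
    6 * Dser f = -(2 * Rg * pderiv 0 f + 3 * Qg ^ 2 * pderiv 1 f) := by
  have hD : Dser = (-(1/3 : ℂ)) • (Rg • (pderiv 0 : Derivation ℂ MM MM))
      + (-(1/2 : ℂ)) • ((Qg ^ 2) • (pderiv 1 : Derivation ℂ MM MM)) := by
    refine derivation_ext fun i => ?_
    fin_cases i <;> simp [Dser, mkDerivation_X, Qg, Rg, pderiv_X]
  have h2 : (6 : MM) * C (-(1/3)) = -2 := by
    rw [← map_ofNat C, ← C_mul, ← map_ofNat C, ← map_neg]; norm_num
  have h3 : (6 : MM) * C (-(1/2)) = -3 := by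
    rw [← map_ofNat C, ← C_mul, ← map_ofNat C, ← map_neg]; norm_num
  rw [hD]
  simp only [Derivation.add_apply, Derivation.smul_apply, smul_eq_mul, smul_eq_C_mul]
  linear_combination (Rg * pderiv 0 f) * h2 + (Qg ^ 2 * pderiv 1 f) * h3

lemma Qg_pow_three_sub_Rg_sq : Qg ^ 3 - Rg ^ 2 = 1728 * Δg := by
  rw [Δg, smul_eq_C_mul, ← mul_assoc, ← map_ofNat C, ← C_mul]
  norm_num

lemma isWeightedHomogeneous_Δg : Δg.IsWeightedHomogeneous wt 12 := by
  have hQ : (Qg ^ 3).IsWeightedHomogeneous wt 12 := (isWeightedHomogeneous_X ℂ wt 0).pow 3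
  have hR : (Rg ^ 2).IsWeightedHomogeneous wt 12 := (isWeightedHomogeneous_X ℂ wt 1).pow 2
  exact (weightedHomogeneousSubmodule ℂ wt 12).smul_mem _ (hQ.sub hR)

lemma euler_wt {f : MM} {k : ℕ} (hf : f.IsWeightedHomogeneous wt k) :
    4 * (Qg * pderiv 0 f) + 6 * (Rg * pderiv 1 f) = k * f := by
  simpa [Fin.sum_univ_two, wt, Qg, Rg, nsmul_eq_mul] using hf.sum_weight_X_mul_pderiv

lemma Δg_mul_pderiv_zero {f : MM} {k : ℕ} (hf : f.IsWeightedHomogeneous wt k) :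
    6912 * (Δg * pderiv 0 f) = 12 * Rg * Dser f + k * Qg ^ 2 * f := by
  linear_combination Qg ^ 2 * euler_wt hf - 2 * Rg * six_mul_Dser f
    - 4 * pderiv 0 f * Qg_pow_three_sub_Rg_sq

lemma Δg_mul_pderiv_one {f : MM} {k : ℕ} (hf : f.IsWeightedHomogeneous wt k) :
    10368 * (Δg * pderiv 1 f) = -(12 * Qg * Dser f + k * Rg * f) := by
  linear_combination -Rg * euler_wt hf + 2 * Qg * six_mul_Dser f
    - 6 * pderiv 1 f * Qg_pow_three_sub_Rg_sq

lemma Δg_mul_pderiv_mem {I : Ideal MM} (hI : ∀ f ∈ I, Dser f ∈ I) {f : MM} {k : ℕ}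
    (hf : f.IsWeightedHomogeneous wt k) (hfI : f ∈ I) (i : Fin 2) : Δg * pderiv i f ∈ I := by
  have hDf := hI f hfI
  fin_cases i
  · refine (I.unit_mul_mem_iff_mem (y := 6912) (isUnit_ofNat 6912)).mp ?_
    rw [Fin.zero_eta, Δg_mul_pderiv_zero hf]
    exact add_mem (I.mul_mem_left _ hDf) (I.mul_mem_left _ hfI)
  · refine (I.unit_mul_mem_iff_mem (y := 10368) (isUnit_ofNat 10368)).mp ?_
    rw [Fin.mk_one, Δg_mul_pderiv_one hf]
    exact neg_mem (add_mem (I.mul_mem_left _ hDf) (I.mul_mem_left _ hfI))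

lemma Δg_pow_succ_mul_pderiv_mem {I : Ideal MM} (hI : ∀ f ∈ I, Dser f ∈ I) {f : MM} {k m : ℕ}
    (hf : f.IsWeightedHomogeneous wt k) (hfI : Δg ^ m * f ∈ I) (i : Fin 2) :
    Δg ^ (m + 1) * pderiv i f ∈ I := by
  rw [Derivation.pow_succ_mul_apply]
  exact sub_mem (Δg_mul_pderiv_mem hI ((isWeightedHomogeneous_Δg.pow m).mul hf) hfI i)
    (I.mul_mem_left _ hfI)

lemma exists_Δg_pow_mem {I : Ideal MM} (hI : ∀ f ∈ I, Dser f ∈ I) (k : ℕ) :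
    ∀ {m : ℕ} {f : MM}, f ≠ 0 → f.IsWeightedHomogeneous wt k → Δg ^ m * f ∈ I →
      ∃ r, Δg ^ r ∈ I := by
  induction k using Nat.strong_induction_on with
  | _ k ih =>
  intro m f hf0 hf hfI
  rcases Nat.eq_zero_or_pos k with rfl | hk
  · have hC : f = C (coeff 0 f) := by
      rw [← weightedHomogeneousComponent_zero f wt_ne_zero, hf.weightedHomogeneousComponent_same]
    refine ⟨m, (I.mul_unit_mem_iff_mem ?_).mp hfI⟩
    rw [hC]
    exact (IsUnit.mk0 _ fun h => hf0 (by rw [hC, h, map_zero])).map C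
  · obtain ⟨i, hi⟩ := hf.exists_pderiv_ne_zero hk.ne' hf0
    have hwi := hf.le_of_pderiv_ne_zero hi
    have hpos := Nat.pos_of_ne_zero (wt_ne_zero i)
    exact ih (k - wt i) (by omega) hi (hf.pderiv (by omega))
      (Δg_pow_succ_mul_pderiv_mem hI hf hfI i)

lemma exists_span_Δg_pow_le {I : Ideal MM} (hI0 : I ≠ ⊥)
    (hgr : ∀ f ∈ I, ∀ n : ℕ, weightedHomogeneousComponent wt n f ∈ I)
    (hD : ∀ f ∈ I, Dser f ∈ I) : ∃ r : ℕ, Ideal.span {Δg} ^ r ≤ I := by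
  obtain ⟨f, hfI, hf0⟩ := Submodule.exists_mem_ne_zero_of_ne_bot hI0
  obtain ⟨n, hn⟩ : ∃ n, weightedHomogeneousComponent wt n f ≠ 0 := by
    by_contra! h
    exact hf0 (by rw [← sum_weightedHomogeneousComponent wt f, finsum_eq_zero_of_forall_eq_zero h])
  obtain ⟨r, hr⟩ := exists_Δg_pow_mem hD n hn
    (weightedHomogeneousComponent_isWeightedHomogeneous n f) (m := 0)
    (by simpa using hgr f hfI n)
  exact ⟨r, by rwa [Ideal.span_singleton_pow, Ideal.span_singleton_le_iff_mem]⟩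

theorem annihilator_of_bounded_R_module_contains_power_of_delta_general
    {N : Type} [AddCommGroup N] [Module MM N] [Module ℂ N] [IsScalarTower ℂ MM N]
    (𝒩 : ℤ → Submodule ℂ N) [DirectSum.Decomposition 𝒩]
    (hcompat : ∀ (n : ℕ) (f : MM), f ∈ weightedHomogeneousSubmodule ℂ wt n →
      ∀ (k : ℤ) (x : N), x ∈ 𝒩 k → f • x ∈ 𝒩 (k + n))
    (d : N →ₗ[ℂ] N)
    (hskew : ∀ (f : MM) (x : N), d (f • x) = f • d x + (Dser f) • x)
    [Module.Finite MM N]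
    (hfd : ∀ k : ℤ, FiniteDimensional ℂ (𝒩 k))
    (B : ℕ) (hbd : ∀ k : ℤ, Module.finrank ℂ (𝒩 k) ≤ B)
    (I : Ideal MM) (hI : ∀ f : MM, f ∈ I ↔ ∀ x : N, f • x = 0) :
    I ≠ ⊥ ∧ IsGradedIdeal I ∧ (∀ f ∈ I, Dser f ∈ I) ∧
    ∃ r : ℕ, (Ideal.span {Δg}) ^ r ≤ I := by
  obtain rfl : I = Module.annihilator MM N :=
    Ideal.ext fun f => (hI f).trans Module.mem_annihilator.symm
  have hD : ∀ f ∈ Module.annihilator MM N, Dser f ∈ Module.annihilator MM N :=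
    fun f => Module.apply_mem_annihilator_of_leibniz Dser d.toAddMonoidHom hskew
  have hgr : ∀ f ∈ Module.annihilator MM N, ∀ n : ℕ,
      weightedHomogeneousComponent wt n f ∈ Module.annihilator MM N :=
    fun f hf => weightedHomogeneousComponent_mem_annihilator hcompat hf
  have hne := annihilator_ne_bot 𝒩 hcompat hfd hbd
  exact ⟨hne, isGradedIdeal_of_weightedHomogeneousComponent_mem hgr, hD,
    exists_span_Δg_pow_le hne hgr hD⟩

/-- Let `N` be a graded module over the skew polynomial ring `R = M[d]`
(`d·f = f·d + D(f)`, `D` the Serre derivation), i.e. a graded `M`-module with a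
degree-2 operator `d` satisfying the skew Leibniz rule.  If the underlying `M`-module is
finitely generated with homogeneous components of bounded dimension, then the annihilator
`Ann_M(N)` is a nonzero graded `d`-ideal of `M`, and hence contains `(Δ)^r` for some
`r ≥ 0`. -/
theorem annihilator_of_bounded_R_module_contains_power_of_delta
    {N : Type} [AddCommGroup N] [Module MM N] [Module ℂ N] [IsScalarTower ℂ MM N]
    (𝒩 : ℤ → Submodule ℂ N) [DirectSum.Decomposition 𝒩]
    (hcompat : ∀ (n : ℕ) (f : MM), f ∈ weightedHomogeneousSubmodule ℂ wt n →
      ∀ (k : ℤ) (x : N), x ∈ 𝒩 k → f • x ∈ 𝒩 (k + n))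
    (d : N →ₗ[ℂ] N)
    (hskew : ∀ (f : MM) (x : N), d (f • x) = f • d x + (Dser f) • x)
    (hdgr : ∀ (k : ℤ) (x : N), x ∈ 𝒩 k → d x ∈ 𝒩 (k + 2))
    [Module.Finite MM N]
    (hfd : ∀ k : ℤ, FiniteDimensional ℂ (𝒩 k))
    (B : ℕ) (hbd : ∀ k : ℤ, Module.finrank ℂ (𝒩 k) ≤ B)
    (I : Ideal MM) (hI : ∀ f : MM, f ∈ I ↔ ∀ x : N, f • x = 0) :
    I ≠ ⊥ ∧ IsGradedIdeal I ∧ (∀ f ∈ I, Dser f ∈ I) ∧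
    ∃ r : ℕ, (Ideal.span {Δg}) ^ r ≤ I :=
  annihilator_of_bounded_R_module_contains_power_of_delta_general 𝒩 hcompat d hskew hfd B hbd I hI

end
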